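/- arXiv:2305.07604 — 3 statements merged into one kernel-verified Lean document; each statement's English description precedes it below -/
import Mathlib

section
/- Let N = n(n-1)/2 and define the sequence a_0 = n, a_{t+1} = a_t - a_t(a_t - 1)/(2(N - t)). Then for all t with 0 ≤ t ≤ N/ω (where ω → ∞), a_t = (n²/(n+t))(1 + ε_t) with |ε_t| ≤ 2t/(N-t). In particular, a_t is bounded between (n²/(n+t))(1 - 2t/(N-t)) and n²/(n+t). -/
/-!
Write `D = 2(N - t)` and `p = n + t`, so that `n² = D + p + t` and the recurrence reads
`a_{t+1} = f(a_t)` with `f(x) = x (D + 1 - x) / D`. The map `f` is increasing on `x ≤ (D + 1)/2`,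
and `c_t = n²/p` stays below `(D + 1)/2` while `t + 1 < N`, so `a_t ≤ c_t` propagates because
`f(c_t) ≤ c_{t+1}`. For the lower bound `ℓ_t = c_t (1 - 4t/D)` one uses
`a (D + 1 - a) ≥ ℓ (D + 1 - a) ≥ ℓ (D + 1 - c)` for `0 ≤ ℓ ≤ a ≤ c`, with `ℓ = max ℓ_t 0` since
`ℓ_t` is negative once `t > N/3`; it then remains to check `ℓ_t (D + 1 - c_t)/D ≥ ℓ_{t+1}`, a
polynomial inequality in `D, p, t`.
-/

namespace QuadraticRecurrence

noncomputable def stepMap (d x : ℝ) : ℝ := x * (d + 1 - x) / d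

-- `gap n t = 2 (N - t)`
def gap (m s : ℝ) : ℝ := m ^ 2 - m - 2 * s

noncomputable def upperBound (m s : ℝ) : ℝ := m ^ 2 / (m + s)

noncomputable def lowerBound (m s : ℝ) : ℝ := upperBound m s * (1 - 4 * s / gap m s)

section StepMap

variable {d x y c ℓ : ℝ}

lemma sub_mul_sub_one_div_eq_stepMap (hd : d ≠ 0) : x - x * (x - 1) / d = stepMap d x := by
  unfold stepMap
  field_simp
  ring

lemma stepMap_le_stepMap (hd : 0 < d) (hxy : x ≤ y) (hsum : x + y ≤ d + 1) :
    stepMap d x ≤ stepMap d y := by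
  unfold stepMap
  apply div_le_div_of_nonneg_right _ hd.le
  nlinarith

lemma mul_div_le_stepMap (hd : 0 < d) (hℓ : 0 ≤ ℓ) (hℓx : ℓ ≤ x) (hxc : x ≤ c) (hc : c ≤ d + 1) :
    ℓ * (d + 1 - c) / d ≤ stepMap d x := by
  apply div_le_div_of_nonneg_right _ hd.le
  calc ℓ * (d + 1 - c) ≤ ℓ * (d + 1 - x) := by gcongr
    _ ≤ x * (d + 1 - x) := by gcongr; linarith

end StepMap

section Bounds

variable {m s : ℝ}

lemma gap_add_one (m s : ℝ) : gap m (s + 1) = gap m s - 2 := by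
  unfold gap; ring

lemma sq_eq_gap_add (m s : ℝ) : m ^ 2 = gap m s + (m + s) + s := by
  unfold gap; ring

lemma two_mul_upperBound_le (hm : 3 ≤ m) (hs : 0 ≤ s) (hD : 4 ≤ gap m s) :
    2 * upperBound m s ≤ gap m s + 1 := by
  have hp : 3 + s ≤ m + s := by linarith
  rw [upperBound, sq_eq_gap_add m s]
  generalize gap m s = D at *
  generalize m + s = p at *
  rw [mul_div_assoc', div_le_iff₀ (by linarith)]
  nlinarith

lemma stepMap_upperBound_le (hm : 0 < m) (hs : 0 ≤ s) (hD : 0 < gap m s) :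
    stepMap (gap m s) (upperBound m s) ≤ upperBound m (s + 1) := by
  have hp : 0 < m + s := by linarith
  simp only [stepMap, upperBound, sq_eq_gap_add m s, ← add_assoc m s 1]
  generalize gap m s = D at *
  generalize m + s = p at *
  rw [← sub_nonneg]
  have key : (D + p + s) / (p + 1) - (D + p + s) / p * (D + 1 - (D + p + s) / p) / D =
      (D + p + s) * (D + s * (p + 1)) / (p ^ 2 * D * (p + 1)) := by
    field_simp
    ring
  rw [key]
  positivity

lemma lowerBound_succ_le (hm : 3 ≤ m) (hs : 0 ≤ s) (hD : 4 ≤ gap m s) :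
    lowerBound m (s + 1) ≤ lowerBound m s * (gap m s + 1 - upperBound m s) / gap m s := by
  have hp : 3 + s ≤ m + s := by linarith
  have hDp : gap m s ≤ (m + s) ^ 2 := by unfold gap; nlinarith
  simp only [lowerBound, upperBound, gap_add_one, sq_eq_gap_add m s, ← add_assoc m s 1]
  generalize gap m s = D at *
  generalize m + s = p at *
  have hG : 0 ≤ D ^ 2 * (4 * p ^ 2 - D - s * p + 3 * s + 2) +
      s * (D * (8 * p ^ 2 + 4 * s * p + 4 * s + 2 * p - 6) - 8 * s * (p + 1)) := by
    have h1 : 0 ≤ 4 * p ^ 2 - D - s * p + 3 * s + 2 := by nlinarith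
    have hX : 0 ≤ 8 * p ^ 2 + 4 * s * p + 4 * s + 2 * p - 6 := by nlinarith
    have h2 : 0 ≤ D * (8 * p ^ 2 + 4 * s * p + 4 * s + 2 * p - 6) - 8 * s * (p + 1) := by
      nlinarith [mul_le_mul_of_nonneg_right hD hX]
    positivity
  have hD2 : 0 < D - 2 := by linarith
  have hp0 : 0 < p := by linarith
  have key : (D + p + s) / p * (1 - 4 * s / D) * (D + 1 - (D + p + s) / p) / D -
      (D + p + s) / (p + 1) * (1 - 4 * (s + 1) / (D - 2)) =
      (D + p + s) * (D ^ 2 * (4 * p ^ 2 - D - s * p + 3 * s + 2) +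
        s * (D * (8 * p ^ 2 + 4 * s * p + 4 * s + 2 * p - 6) - 8 * s * (p + 1))) /
        (p ^ 2 * D ^ 2 * (p + 1) * (D - 2)) := by
    field_simp
    ring
  rw [← sub_nonneg, key]
  positivity

lemma mapsTo_stepMap (hm : 3 ≤ m) (hs : 0 ≤ s) (hD : 4 ≤ gap m s) :
    Set.MapsTo (stepMap (gap m s)) (Set.Icc (max (lowerBound m s) 0) (upperBound m s))
      (Set.Icc (max (lowerBound m (s + 1)) 0) (upperBound m (s + 1))) := by
  rintro x ⟨hlx, hxu⟩
  have hd : 0 < gap m s := by linarith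
  have hvertex := two_mul_upperBound_le hm hs hD
  have hu0 : 0 ≤ upperBound m s := by unfold upperBound; positivity
  have hconcave := mul_div_le_stepMap hd (le_max_right _ _) hlx hxu (by linarith)
  refine ⟨max_le ?_ ?_, ?_⟩
  · calc lowerBound m (s + 1)
        ≤ lowerBound m s * (gap m s + 1 - upperBound m s) / gap m s := lowerBound_succ_le hm hs hD
      _ ≤ max (lowerBound m s) 0 * (gap m s + 1 - upperBound m s) / gap m s := by
        gcongr
        · linarith
        · exact le_max_left _ _
      _ ≤ stepMap (gap m s) x := hconcave
  · refine le_trans ?_ hconcave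
    have : 0 ≤ gap m s + 1 - upperBound m s := by linarith
    positivity
  · calc stepMap (gap m s) x ≤ stepMap (gap m s) (upperBound m s) :=
          stepMap_le_stepMap hd hxu (by linarith)
      _ ≤ upperBound m (s + 1) := stepMap_upperBound_le (by linarith) hs hd

end Bounds

lemma four_le_gap_of_succ_lt {n t : ℕ} (h : (t + 1 : ℝ) < n * (n - 1) / 2) : 4 ≤ gap n t := by
  rw [← Nat.cast_choose_two] at h
  have h2 : ((t + 2 : ℕ) : ℝ) ≤ n.choose 2 := by exact_mod_cast h
  rw [Nat.cast_choose_two] at h2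
  unfold gap
  push_cast at h2
  linarith

lemma three_le_of_four_le_gap {n t : ℕ} (h : 4 ≤ gap n t) : 3 ≤ (n : ℝ) := by
  have h2 : 2 < n := by
    by_contra! hn
    have : (n : ℝ) ≤ 2 := by exact_mod_cast hn
    unfold gap at h
    nlinarith [t.cast_nonneg (α := ℝ)]
  exact_mod_cast h2

lemma mem_Icc_of_recurrence {n : ℕ} {N : ℝ} (hN : N = n * (n - 1) / 2) {a : ℕ → ℝ}
    (ha0 : a 0 = n)
    (harec : ∀ t : ℕ, (t : ℝ) < N → a (t + 1) = a t - a t * (a t - 1) / (2 * (N - t)))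
    (t : ℕ) (ht : (t : ℝ) < N) :
    a t ∈ Set.Icc (max (lowerBound n t) 0) (upperBound n t) := by
  induction t with
  | zero =>
    simp [ha0, lowerBound, upperBound, sq]
  | succ t ih =>
    push_cast at ht
    have hD := four_le_gap_of_succ_lt (hN ▸ ht)
    have ht' : (t : ℝ) < N := by linarith
    have hgap : 2 * (N - t) = gap n t := by rw [hN, gap]; ring
    rw [harec t ht', hgap, sub_mul_sub_one_div_eq_stepMap (by linarith)]
    exact_mod_cast mapsTo_stepMap (three_le_of_four_le_gap hD) t.cast_nonneg hD (ih ht')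

end QuadraticRecurrence

open QuadraticRecurrence

theorem stmt_0_general (n : ℕ) (N : ℝ) (hN : N = (n : ℝ) * ((n : ℝ) - 1) / 2)
    (a : ℕ → ℝ) (ha0 : a 0 = n)
    (harec : ∀ t : ℕ, (t : ℝ) < N →
      a (t + 1) = a t - a t * (a t - 1) / (2 * (N - (t : ℝ))))
    (t : ℕ) (ht : (t : ℝ) < N) :
    ((n : ℝ) ^ 2 / ((n : ℝ) + (t : ℝ))) * (1 - 2 * (t : ℝ) / (N - (t : ℝ))) ≤ a t ∧
      a t ≤ (n : ℝ) ^ 2 / ((n : ℝ) + (t : ℝ)) := by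
  obtain ⟨hlower, hupper⟩ := mem_Icc_of_recurrence hN ha0 harec t ht
  have hratio : 2 * (t : ℝ) / (N - t) = 4 * t / gap n t := by
    rw [show gap n t = 2 * (N - t) by rw [hN, gap]; ring]
    field_simp
    ring
  exact ⟨hratio ▸ (le_max_left _ _).trans hlower, hupper⟩

/-- For the deterministic recurrence a_0 = n,
a_{t+1} = a_t - a_t(a_t-1)/(2(N-t)) with N = n(n-1)/2, for all t with t < N we have
(n²/(n+t))(1 - 2t/(N-t)) ≤ a_t ≤ n²/(n+t). -/
theorem stmt_0 (n : ℕ) (hn : 0 < n) (N : ℝ) (hN : N = (n : ℝ) * ((n : ℝ) - 1) / 2)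
    (a : ℕ → ℝ) (ha0 : a 0 = n)
    (harec : ∀ t : ℕ, (t : ℝ) < N →
      a (t + 1) = a t - a t * (a t - 1) / (2 * (N - (t : ℝ))))
    (t : ℕ) (ht : (t : ℝ) < N) :
    ((n : ℝ) ^ 2 / ((n : ℝ) + (t : ℝ))) * (1 - 2 * (t : ℝ) / (N - (t : ℝ))) ≤ a t ∧
      a t ≤ (n : ℝ) ^ 2 / ((n : ℝ) + (t : ℝ)) :=
  stmt_0_general n N hN a ha0 harec t ht
end

section
/- The function b_k(t) = β·r(t)/(1 - r(t)), where β = 2k - 1 and r(t) = (n/(n+β))(1 - t/N)^{β/2}, satisfies the differential equation b_k'(t) = -(k·b_k(t))/(N - t) - b_k(t)(b_k(t) - 1)/(2(N - t)) with b_k(0) = n. -/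
/-!
Write `r = c · x^{β/2}` with `x(t) = 1 - t/N`. Then `r' = -(β/2) r/(N - t)`, and the Möbius
transform `b = β r/(1 - r)` turns this linear equation into the Riccati equation
`b' = -b (b + β)/(2(N - t))`, which is the stated one because `β + 1 = 2k`.
-/

theorem hasDerivAt_one_sub_div_rpow {N t : ℝ} (p : ℝ) (hN : N ≠ 0) (ht : t ≠ N) :
    HasDerivAt (fun s => (1 - s / N) ^ p) (-(p / (N - t)) * (1 - t / N) ^ p) t := by
  have hx : 1 - t / N ≠ 0 := by
    rw [sub_ne_zero, ne_comm, ne_eq, div_eq_one_iff_eq hN]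
    exact ht
  have hlin : HasDerivAt (fun s => 1 - s / N) (-(1 / N)) t := by
    simpa using ((hasDerivAt_id t).div_const N).const_sub 1
  convert hlin.rpow_const (p := p) (Or.inl hx) using 1
  rw [Real.rpow_sub_one hx]
  have hNt : N - t ≠ 0 := sub_ne_zero.mpr (Ne.symm ht)
  field_simp

theorem HasDerivAt.const_mul_div_one_sub {r : ℝ → ℝ} {a t : ℝ} (β : ℝ)
    (hr : HasDerivAt r (a * r t) t) (hr1 : r t ≠ 1) (hβ : β ≠ 0) :
    HasDerivAt (fun s => β * r s / (1 - r s))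
      (a * (β * r t / (1 - r t)) * (β * r t / (1 - r t) + β) / β) t := by
  have h1r : 1 - r t ≠ 0 := sub_ne_zero.mpr (Ne.symm hr1)
  refine ((hr.const_mul β).fun_div (hr.const_sub 1) h1r).congr_deriv ?_
  field_simp
  ring

theorem stmt_14_general (n k : ℕ) (hk : 1 ≤ k) (N : ℝ)
    (β : ℝ) (hβ : β = 2 * (k : ℝ) - 1)
    (r b : ℝ → ℝ)
    (hr : ∀ t : ℝ, r t = ((n : ℝ) / ((n : ℝ) + β)) * (1 - t / N) ^ (β / 2))
    (hb : ∀ t : ℝ, b t = β * r t / (1 - r t)) :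
    b 0 = n ∧ ∀ t ∈ Set.Ioo (0 : ℝ) N,
      HasDerivAt b (-((k : ℝ) * b t) / (N - t) - b t * (b t - 1) / (2 * (N - t))) t := by
  have hβpos : 0 < β := by
    have : (1 : ℝ) ≤ k := by exact_mod_cast hk
    linarith
  have hnβ : (0 : ℝ) < n + β := by positivity
  set c := (n : ℝ) / (n + β) with hc
  have hc1 : c < 1 := (div_lt_one hnβ).mpr (by linarith)
  refine ⟨?_, fun t ⟨ht0, htN⟩ => ?_⟩
  · rw [hb, hr, zero_div, sub_zero, Real.one_rpow, mul_one, hc, one_sub_div hnβ.ne', add_sub_cancel_left]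
    field_simp
  have hN : 0 < N := ht0.trans htN
  have hx : 0 < 1 - t / N := sub_pos.mpr ((div_lt_one hN).mpr htN)
  have hrt1 : r t < 1 := by
    have hpow : (1 - t / N) ^ (β / 2) ≤ 1 :=
      Real.rpow_le_one hx.le (by linarith [div_pos ht0 hN]) (by positivity)
    rw [hr]
    nlinarith [Real.rpow_pos_of_pos hx (β / 2), div_nonneg (Nat.cast_nonneg n) hnβ.le]
  have hr' : HasDerivAt r (-(β / 2 / (N - t)) * r t) t := by
    rw [hr t, show r = _ from funext hr, mul_left_comm]
    exact (hasDerivAt_one_sub_div_rpow (β / 2) hN.ne' htN.ne).const_mul c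
  rw [hb t, show b = _ from funext hb]
  convert hr'.const_mul_div_one_sub β hrt1.ne hβpos.ne' using 1
  have hNt : N - t ≠ 0 := sub_ne_zero.mpr htN.ne'
  rw [hβ]
  field_simp
  ring

/-- b_k(t) = β r(t)/(1 - r(t)) with β = 2k-1 and
r(t) = (n/(n+β))(1-t/N)^{β/2} satisfies b_k(0) = n and
b_k'(t) = -k b_k(t)/(N-t) - b_k(t)(b_k(t)-1)/(2(N-t)) on (0, N). -/
theorem stmt_14 (n k : ℕ) (hn : 1 ≤ n) (hk : 1 ≤ k) (N : ℝ) (hN : 0 < N)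
    (β : ℝ) (hβ : β = 2 * (k : ℝ) - 1)
    (r b : ℝ → ℝ)
    (hr : ∀ t : ℝ, r t = ((n : ℝ) / ((n : ℝ) + β)) * (1 - t / N) ^ (β / 2))
    (hb : ∀ t : ℝ, b t = β * r t / (1 - r t)) :
    b 0 = n ∧ ∀ t ∈ Set.Ioo (0 : ℝ) N,
      HasDerivAt b (-((k : ℝ) * b t) / (N - t) - b t * (b t - 1) / (2 * (N - t))) t :=
  stmt_14_general n k hk N β hβ r b hr hb
end

section
/- Fix N = n(n-1)/2 and the sequence a_0 = n, a_{t+1} = a_t - a_t(a_t-1)/(2(N-t)). Then (a_t) is nonincreasing and a_t ≥ 1 for all 0 ≤ t ≤ N (where defined). -/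
set_option maxHeartbeats 1000000 in
/-- for N = n(n-1)/2 and the sequence a_0 = n,
a_{t+1} = a_t - a_t(a_t-1)/(2(N-t)), the sequence is nonincreasing and stays ≥ 1:
a_t ≥ 1 for all t ≤ N, and a_{t+1} ≤ a t for all t < N. -/
theorem stmt_16 (n : ℕ) (hn : 1 ≤ n) (N : ℝ) (hN : N = (n : ℝ) * ((n : ℝ) - 1) / 2)
    (a : ℕ → ℝ) (ha0 : a 0 = n)
    (harec : ∀ t : ℕ, (t : ℝ) < N →
      a (t + 1) = a t - a t * (a t - 1) / (2 * (N - (t : ℝ)))) :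
    (∀ t : ℕ, (t : ℝ) ≤ N → 1 ≤ a t) ∧
      (∀ t : ℕ, (t : ℝ) < N → a (t + 1) ≤ a t) := by
  -- N is (the cast of) a natural number
  have h2dvd : 2 ∣ n * (n - 1) := by
    rcases Nat.even_or_odd n with h | h
    · exact Dvd.dvd.mul_right h.two_dvd _
    · have : Even (n - 1) := Nat.Odd.sub_odd h odd_one
      exact Dvd.dvd.mul_left this.two_dvd _
  have hkeyN : ((n * (n - 1) / 2 : ℕ) : ℝ) = N := by
    have h := Nat.div_mul_cancel h2dvd
    have h' := congrArg (Nat.cast : ℕ → ℝ) h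
    push_cast [Nat.cast_sub hn] at h'
    rw [hN]; linarith
  have main : ∀ t : ℕ, ((t : ℝ) ≤ N → 1 ≤ a t) ∧
      ((t : ℝ) < N → a t * (a t - 1) ≤ 2 * (N - (t : ℝ))) := by
    intro t
    induction t with
    | zero =>
      constructor
      · intro _; rw [ha0]; exact_mod_cast hn
      · intro _
        rw [ha0, hN]
        push_cast
        ring_nf
        nlinarith [hN]
    | succ t ih =>
      have step1 : ((t : ℝ) + 1) ≤ N → 1 ≤ a (t + 1) ∧ a (t + 1) ≤ a t := by
        intro ht1
        have htN : (t : ℝ) < N := by linarith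
        have hb1 := ih.1 htN.le
        have hinv := ih.2 htN
        have hrec := harec t htN
        have hM0 : (0 : ℝ) < 2 * (N - t) := by linarith
        have hM2 : (2 : ℝ) ≤ 2 * (N - t) := by linarith
        have hbM : a t ≤ 2 * (N - t) := by
          rcases le_or_gt (a t) 2 with h | h
          · linarith
          · nlinarith
        have hd0 : 0 ≤ a t * (a t - 1) / (2 * (N - t)) :=
          div_nonneg (by nlinarith) hM0.le
        have hd : a t * (a t - 1) / (2 * (N - t)) ≤ a t - 1 := by
          rw [div_le_iff₀ hM0]; nlinarith
        constructor
        · rw [hrec]; linarith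
        · rw [hrec]; linarith
      constructor
      · intro ht1
        push_cast at ht1
        exact (step1 ht1).1
      · intro ht1
        push_cast at ht1
        have htN : (t : ℝ) < N := by linarith
        -- integrality: t + 2 ≤ N
        have ht2 : (t : ℝ) + 2 ≤ N := by
          rw [← hkeyN] at ht1 ⊢
          have h1 : ((t : ℝ) + 1) < ((n * (n - 1) / 2 : ℕ) : ℝ) := ht1
          have h2 : t + 1 < n * (n - 1) / 2 := by exact_mod_cast h1
          have h3 : t + 2 ≤ n * (n - 1) / 2 := h2
          exact_mod_cast h3
        have hM0 : (0 : ℝ) < 2 * (N - t) := by linarith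
        have hM4 : (4 : ℝ) ≤ 2 * (N - t) := by linarith
        have hb1 := ih.1 htN.le
        have hinv := ih.2 htN
        have hrec := harec t htN
        have hbM : a t ≤ 2 * (N - t) := by
          rcases le_or_gt (a t) 2 with h | h
          · linarith
          · nlinarith
        obtain ⟨hc1, hcb⟩ := step1 (by linarith)
        set b := a t with hb
        set M := 2 * (N - (t : ℝ)) with hM
        have hgoal_eq : (2 : ℝ) * (N - ((t : ℕ) + 1 : ℕ)) = M - 2 := by
          push_cast; rw [hM]; ring
        have hcid : a (t + 1) * (a (t + 1) - 1)
            = b * (b - 1) * (M - b) * (M - b + 1) / M ^ 2 := by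
          rw [hrec]; field_simp; ring
        rw [hgoal_eq, hcid]
        rw [div_le_iff₀ (by positivity)]
        rcases le_or_gt b 2 with h2 | h2
        · -- here a (t+1) ∈ [1, 2], so c(c-1) ≤ 2 ≤ M - 2; transfer via hcid
          have hsmall : a (t + 1) * (a (t + 1) - 1) ≤ 2 := by
            have := mul_nonneg (by linarith : (0:ℝ) ≤ a (t+1) - 1)
              (by linarith : (0:ℝ) ≤ 2 - a (t+1))
            nlinarith
          rw [hcid, div_le_iff₀ (by positivity)] at hsmall
          have hM4sq : 0 ≤ (M - 4) * M ^ 2 :=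
            mul_nonneg (by linarith) (sq_nonneg M)
          linarith
        · have hnn : (0:ℝ) ≤ (M - b) * (M - b + 1) :=
            mul_nonneg (by linarith) (by linarith)
          have hA : b * (b - 1) * ((M - b) * (M - b + 1))
              ≤ M * ((M - b) * (M - b + 1)) :=
            mul_le_mul_of_nonneg_right hinv hnn
          have hB : (M - b) * (M - b + 1) ≤ M * (M - 2) := by
            have h4 : (0:ℝ) ≤ (2 * b - 4) * M :=
              mul_nonneg (by linarith) hM0.le
            linarith [h4, hinv]
          have hB' : M * ((M - b) * (M - b + 1)) ≤ M * (M * (M - 2)) :=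
            mul_le_mul_of_nonneg_left hB hM0.le
          linarith [hA, hB']
  constructor
  · exact fun t ht => (main t).1 ht
  · intro t ht
    have hb1 := (main t).1 ht.le
    have hrec := harec t ht
    have hd0 : 0 ≤ a t * (a t - 1) / (2 * (N - t)) :=
      div_nonneg (by nlinarith) (by linarith)
    rw [hrec]; linarith
end
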